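/- Let Y ∈ {0,1}^{n×m} be a binary matrix whose column-sum vector r = Yᵀe satisfies the power law r_g = r_max · g^(−α) for g = 1,…,m with r_max > 0 and α > 2. Let (σ1, p1, q1) be a principal singular triple of Y in which p1 and q1 are entrywise nonnegative. Then cos(r, q1) ≥ √((2 − ζ(α))/ζ(2α)). -/

import Mathlib

open Matrix

/-- Riemann zeta function for real `s > 1`: `ζ(s) = ∑_{j=1}^∞ j^(−s)`. -/
noncomputable def zetaR (s : ℝ) : ℝ := ∑' j : ℕ, ((j : ℝ) + 1) ^ (-s)

/-- Euclidean (L2) norm of a vector. -/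
noncomputable def l2norm {k : ℕ} (v : Fin k → ℝ) : ℝ := Real.sqrt (∑ i, v i ^ 2)

/-- Cosine similarity of two vectors. -/
noncomputable def vcos {k : ℕ} (x y : Fin k → ℝ) : ℝ :=
  (∑ i, x i * y i) / (l2norm x * l2norm y)

/-!
Testing the operator norm on the first basis vector gives `σ₁² ≥ ‖Y e₁‖² = r₁ = r_max`, while
Cauchy–Schwarz on `σ₁ q₁ = Yᵀ p₁` gives `σ₁² (q₁)_g² ≤ r_g`. Hence `(q₁)_g² ≤ r_g / r₁ = g^(−α)`: a
principal singular vector cannot put more weight on a column than its relative popularity allows.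
Summing over `g ≥ 2` and using `‖q₁‖ = 1` forces `(q₁)₁² ≥ 2 − ζ(α)`, so
`⟨r, q₁⟩ ≥ r₁ (q₁)₁ ≥ r_max √(2 − ζ(α))`, whereas `‖r‖ ≤ r_max √ζ(2α)`.
-/

section Zeta

lemma summable_zetaR_terms {s : ℝ} (hs : 1 < s) :
    Summable (fun j : ℕ => ((j : ℝ) + 1) ^ (-s)) := by
  have h := (summable_nat_add_iff 1).2 (Real.summable_nat_rpow.2 (by linarith : -s < -1))
  exact h.congr fun j => by push_cast; rfl

lemma zetaR_nonneg (s : ℝ) : 0 ≤ zetaR s :=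
  tsum_nonneg fun _ => by positivity

lemma sum_fin_rpow_le_zetaR {s : ℝ} (hs : 1 < s) (m : ℕ) :
    ∑ g : Fin m, ((g : ℝ) + 1) ^ (-s) ≤ zetaR s := by
  rw [Fin.sum_univ_eq_sum_range (fun j => ((j : ℝ) + 1) ^ (-s))]
  exact (summable_zetaR_terms hs).sum_le_tsum _ fun j _ => by positivity

end Zeta

section L2Norm

variable {k : ℕ}

lemma sum_sq_eq_one_of_l2norm_eq_one {v : Fin k → ℝ} (hv : l2norm v = 1) :
    ∑ i, v i ^ 2 = 1 :=
  Real.sqrt_eq_one.1 hv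

lemma apply_le_l2norm (v : Fin k → ℝ) (i : Fin k) : v i ≤ l2norm v :=
  (le_abs_self _).trans <| Real.abs_le_sqrt <|
    Finset.single_le_sum (f := fun j => v j ^ 2) (fun _ _ => sq_nonneg _) (Finset.mem_univ i)

lemma l2norm_single_one (i : Fin k) : l2norm (Pi.single i 1) = 1 := by
  simp [l2norm, apply_ite (· ^ 2), Pi.single_apply]

lemma div_le_vcos {r q : Fin k → ℝ} (hr : ∀ i, 0 ≤ r i) (hq : ∀ i, 0 ≤ q i) (hq1 : l2norm q = 1)
    {i : Fin k} (hri : 0 < r i) {a b : ℝ} (hqi : a ≤ q i) (hb : l2norm r ≤ r i * b) :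
    a / b ≤ vcos r q := by
  have hnorm : 0 < l2norm r := hri.trans_le (apply_le_l2norm r i)
  have hb0 : 0 < b := pos_of_mul_pos_right (hnorm.trans_le hb) hri.le
  calc a / b = r i * a / (r i * b) := (mul_div_mul_left a b hri.ne').symm
    _ ≤ r i * q i / l2norm r :=
      div_le_div₀ (mul_nonneg hri.le (hq i)) (by gcongr) hnorm hb
    _ ≤ vcos r q := by
      rw [vcos, hq1, mul_one]
      gcongr
      exact Finset.single_le_sum (f := fun j => r j * q j)
        (fun j _ => mul_nonneg (hr j) (hq j)) (Finset.mem_univ i)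

end L2Norm

section SingularVector

variable {n m : ℕ} {Y : Matrix (Fin n) (Fin m) ℝ}

lemma sum_sq_col_le_sq {σ : ℝ} (hop : ∀ q : Fin m → ℝ, l2norm q = 1 → l2norm (Y *ᵥ q) ≤ σ)
    (g : Fin m) : ∑ u, Y u g ^ 2 ≤ σ ^ 2 := by
  have h := hop _ (l2norm_single_one g)
  rw [mulVec_single_one, l2norm] at h
  exact (Real.sqrt_le_iff.1 h).2

lemma sq_mul_le_sum_sq_col {σ : ℝ} {p : Fin n → ℝ} {q : Fin m → ℝ} (hp : l2norm p = 1)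
    (hYp : Yᵀ *ᵥ p = σ • q) (g : Fin m) : (σ * q g) ^ 2 ≤ ∑ u, Y u g ^ 2 := by
  have hg : σ * q g = ∑ u, Y u g * p u := by
    simpa [mulVec, dotProduct] using (congrFun hYp g).symm
  calc (σ * q g) ^ 2 = (∑ u, Y u g * p u) ^ 2 := by rw [hg]
    _ ≤ (∑ u, Y u g ^ 2) * ∑ u, p u ^ 2 := Finset.sum_mul_sq_le_sq_mul_sq _ _ _
    _ = ∑ u, Y u g ^ 2 := by rw [sum_sq_eq_one_of_l2norm_eq_one hp, mul_one]

lemma sum_sq_col_mul_sq_le {σ : ℝ} {p : Fin n → ℝ} {q : Fin m → ℝ}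
    (hop : ∀ q : Fin m → ℝ, l2norm q = 1 → l2norm (Y *ᵥ q) ≤ σ) (hp : l2norm p = 1)
    (hYp : Yᵀ *ᵥ p = σ • q) (g g' : Fin m) :
    (∑ u, Y u g' ^ 2) * q g ^ 2 ≤ ∑ u, Y u g ^ 2 :=
  calc (∑ u, Y u g' ^ 2) * q g ^ 2 ≤ σ ^ 2 * q g ^ 2 := by
        gcongr; exact sum_sq_col_le_sq hop g'
    _ = (σ * q g) ^ 2 := by ring
    _ ≤ ∑ u, Y u g ^ 2 := sq_mul_le_sum_sq_col hp hYp g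

lemma sum_sq_col_eq_colSum_of_binary (hbin : ∀ u i, Y u i = 0 ∨ Y u i = 1) (g : Fin m) :
    ∑ u, Y u g ^ 2 = (Yᵀ *ᵥ fun _ => 1) g := by
  simp only [mulVec, dotProduct, transpose_apply, mul_one]
  refine Finset.sum_congr rfl fun u _ => ?_
  rcases hbin u g with h | h <;> simp [h]

end SingularVector

section PowerLaw

variable {m : ℕ} {α : ℝ}

lemma two_sub_zetaR_le_sq_zero (hα : 1 < α) {q : Fin (m + 1) → ℝ} (hq : ∑ i, q i ^ 2 = 1)
    (hbound : ∀ g : Fin (m + 1), q g ^ 2 ≤ ((g : ℝ) + 1) ^ (-α)) :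
    2 - zetaR α ≤ q 0 ^ 2 := by
  have htail : ∑ g ∈ Finset.univ.erase 0, q g ^ 2 ≤ zetaR α - 1 :=
    calc ∑ g ∈ Finset.univ.erase 0, q g ^ 2
        ≤ ∑ g ∈ Finset.univ.erase (0 : Fin (m + 1)), ((g : ℝ) + 1) ^ (-α) :=
          Finset.sum_le_sum fun g _ => hbound g
      _ = ∑ g : Fin (m + 1), ((g : ℝ) + 1) ^ (-α) - 1 := by
          rw [Finset.sum_erase_eq_sub (Finset.mem_univ 0)]; simp
      _ ≤ zetaR α - 1 := by linarith [sum_fin_rpow_le_zetaR hα (m + 1)]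
  rw [Finset.sum_erase_eq_sub (Finset.mem_univ 0), hq] at htail
  linarith

lemma l2norm_le_of_powerLaw (hα : 1 < 2 * α) {rmax : ℝ} (hrmax : 0 ≤ rmax) {r : Fin m → ℝ}
    (hpow : ∀ g : Fin m, r g = rmax * ((g : ℝ) + 1) ^ (-α)) :
    l2norm r ≤ rmax * Real.sqrt (zetaR (2 * α)) := by
  have hsq : ∀ g : Fin m, r g ^ 2 = rmax ^ 2 * ((g : ℝ) + 1) ^ (-(2 * α)) := fun g => by
    rw [hpow, mul_pow, ← Real.rpow_mul_natCast (by positivity)]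
    ring_nf
  calc l2norm r = Real.sqrt (rmax ^ 2 * ∑ g : Fin m, ((g : ℝ) + 1) ^ (-(2 * α))) := by
        rw [l2norm, Finset.mul_sum]; simp only [hsq]
    _ ≤ Real.sqrt (rmax ^ 2 * zetaR (2 * α)) := by
        gcongr; exact sum_fin_rpow_le_zetaR hα m
    _ = rmax * Real.sqrt (zetaR (2 * α)) := by
        rw [Real.sqrt_mul (sq_nonneg _), Real.sqrt_sq hrmax]

end PowerLaw

theorem popularity_memorization_bound_simple_general
    (n m : ℕ) (Y : Matrix (Fin n) (Fin m) ℝ)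
    (hbin : ∀ u i, Y u i = 0 ∨ Y u i = 1)
    (α rmax : ℝ) (hα : 2 < α) (hrmax : 0 < rmax)
    (r : Fin m → ℝ) (hrdef : r = Yᵀ.mulVec (fun _ => 1))
    (hpow : ∀ g : Fin m, r g = rmax * (((g : ℕ) : ℝ) + 1) ^ (-α))
    (σ1 : ℝ) (p1 : Fin n → ℝ) (q1 : Fin m → ℝ)
    (hop : ∀ q : Fin m → ℝ, l2norm q = 1 → l2norm (Y.mulVec q) ≤ σ1)
    (hp1 : l2norm p1 = 1) (hq1 : l2norm q1 = 1)
    (hYp : Yᵀ.mulVec p1 = σ1 • q1)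
    (hqnn : ∀ i, 0 ≤ q1 i) :
    vcos r q1 ≥ Real.sqrt ((2 - zetaR α) / zetaR (2 * α)) := by
  obtain ⟨m, rfl⟩ : ∃ k, m = k + 1 :=
    Nat.exists_eq_succ_of_ne_zero (by rintro rfl; simp [l2norm] at hq1)
  have hcol : ∀ g, ∑ u, Y u g ^ 2 = r g := fun g => by
    rw [hrdef, sum_sq_col_eq_colSum_of_binary hbin]
  have hr0 : r 0 = rmax := by simp [hpow]
  have hq_le : ∀ g : Fin (m + 1), q1 g ^ 2 ≤ ((g : ℝ) + 1) ^ (-α) := fun g => by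
    have h := sum_sq_col_mul_sq_le hop hp1 hYp g 0
    rw [hcol, hcol, hr0, hpow, mul_le_mul_iff_right₀ hrmax] at h
    exact h
  have hq0 : 2 - zetaR α ≤ q1 0 ^ 2 :=
    two_sub_zetaR_le_sq_zero (by linarith) (sum_sq_eq_one_of_l2norm_eq_one hq1) hq_le
  have hrnorm := l2norm_le_of_powerLaw (by linarith) hrmax.le hpow
  rw [ge_iff_le, Real.sqrt_div' _ (zetaR_nonneg _)]
  exact div_le_vcos (fun g => hpow g ▸ by positivity) hqnn hq1 (i := 0) (hr0 ▸ hrmax)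
    (Real.sqrt_le_iff.2 ⟨hqnn 0, hq0⟩) (hr0 ▸ hrnorm)

/-- Let `Y ∈ {0,1}^{n×m}` be a binary matrix whose column-sum vector
`r = Yᵀe` satisfies the power law `r_g = r_max · g^(−α)` with `r_max > 0` and `α > 2`.
Let `(σ1, p1, q1)` be a principal singular triple of `Y` (σ1 the largest singular value,
i.e., the operator 2-norm, `p1, q1` unit vectors with `Y q1 = σ1 p1`, `Yᵀ p1 = σ1 q1`)
where `p1` and `q1` are entrywise nonnegative.  Then
`cos(r, q1) ≥ √((2 − ζ(α))/ζ(2α))`. -/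
theorem popularity_memorization_bound_simple
    (n m : ℕ) (Y : Matrix (Fin n) (Fin m) ℝ)
    (hbin : ∀ u i, Y u i = 0 ∨ Y u i = 1)
    (α rmax : ℝ) (hα : 2 < α) (hrmax : 0 < rmax)
    (r : Fin m → ℝ) (hrdef : r = Yᵀ.mulVec (fun _ => 1))
    (hpow : ∀ g : Fin m, r g = rmax * (((g : ℕ) : ℝ) + 1) ^ (-α))
    (σ1 : ℝ) (p1 : Fin n → ℝ) (q1 : Fin m → ℝ)
    (hσnn : 0 ≤ σ1)
    (hop : ∀ q : Fin m → ℝ, l2norm q = 1 → l2norm (Y.mulVec q) ≤ σ1)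
    (hp1 : l2norm p1 = 1) (hq1 : l2norm q1 = 1)
    (hYq : Y.mulVec q1 = σ1 • p1) (hYp : Yᵀ.mulVec p1 = σ1 • q1)
    (hpnn : ∀ u, 0 ≤ p1 u) (hqnn : ∀ i, 0 ≤ q1 i) :
    vcos r q1 ≥ Real.sqrt ((2 - zetaR α) / zetaR (2 * α)) :=
  popularity_memorization_bound_simple_general n m Y hbin α rmax hα hrmax r hrdef hpow σ1 p1 q1 hop
    hp1 hq1 hYp hqnn
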